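/- arXiv:1511.04260 — 3 statements merged into one kernel-verified Lean document; each statement's English description precedes it below -/
import Mathlib

section
/- Let X_0 : 𝔥 → 𝔥_* be a densely defined closed operator between separable Hilbert spaces with A_0 = X_0* X_0, and suppose 0 is an isolated point of the spectrum of A_0 with distance d^0 ≥ 36δ to the rest of the spectrum, where δ > 0. Let 𝔑 = Ker X_0 and let X_p : 𝔥 → 𝔥_* be bounded. For ω ∈ 𝔑, let ψ(ω) ∈ Dom X_0 ∩ 𝔑^⊥ be the unique weak solution of (X_0 ψ, X_0 ζ) = (−X_p ω, X_0 ζ) for all ζ ∈ Dom X_0 ∩ 𝔑^⊥. Define Z : 𝔥 → 𝔥 by Zω = ψ(ω) on 𝔑 and Z = 0 on 𝔑^⊥. Then ‖Z‖ ≤ (1/6) δ^{-1/2} ‖X_p‖. -/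
/-!
Testing the weak equation with `ζ = ψ(ω)` itself gives `‖X₀ψ‖² = Re⟪-X_p ω, X₀ψ⟫ ≤ ‖X_p ω‖ ‖X₀ψ‖`,
so `‖X₀ψ‖ ≤ ‖X_p‖ ‖ω‖`. Since `ψ(ω) ⊥ Ker X₀`, the spectral gap gives `6 √δ ‖ψ‖ ≤ ‖X₀ψ‖`.
Finally `Z v = ψ(P v)` for the orthogonal projection `P` onto `Ker X₀`, and `‖P v‖ ≤ ‖v‖`.
-/

theorem norm_le_of_inner_self_eq_inner {𝕜 E : Type*} [RCLike 𝕜] [SeminormedAddCommGroup E]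
    [InnerProductSpace 𝕜 E] {a b : E} (h : inner 𝕜 a a = inner 𝕜 b a) : ‖a‖ ≤ ‖b‖ := by
  rcases (norm_nonneg a).eq_or_lt with ha | ha
  · rw [← ha]; exact norm_nonneg b
  refine le_of_mul_le_mul_right ?_ ha
  calc ‖a‖ * ‖a‖ = RCLike.re (inner 𝕜 b a) := by rw [← h, inner_self_eq_norm_mul_norm]
    _ ≤ ‖inner 𝕜 b a‖ := RCLike.re_le_norm _
    _ ≤ ‖b‖ * ‖a‖ := norm_inner_le_norm b a

theorem Submodule.apply_starProjection_of_forall_mem_orthogonal {𝕜 E F G : Type*} [RCLike 𝕜]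
    [NormedAddCommGroup E] [InnerProductSpace 𝕜 E] [AddCommGroup F] [FunLike G E F]
    [AddMonoidHomClass G E F] (K : Submodule 𝕜 E) [K.HasOrthogonalProjection] (f : G)
    (hf : ∀ v ∈ Kᗮ, f v = 0) (v : E) : f (K.starProjection v) = f v := by
  rw [← sub_eq_zero, ← map_sub, ← neg_sub, map_neg, hf _ (K.sub_starProjection_mem_orthogonal v),
    neg_zero]

theorem six_mul_sqrt_mul_le_of_mul_sq_le {δ x y : ℝ} (hδ : 0 ≤ δ) (hx : 0 ≤ x) (hy : 0 ≤ y)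
    (h : 36 * δ * x ^ 2 ≤ y ^ 2) : 6 * √δ * x ≤ y := by
  refine (pow_le_pow_iff_left₀ (by positivity) hy two_ne_zero).1 ?_
  calc (6 * √δ * x) ^ 2 = 36 * δ * x ^ 2 := by rw [mul_pow, mul_pow, Real.sq_sqrt hδ]; ring
    _ ≤ y ^ 2 := h

theorem stmt_3_general {H H' : Type*}
    [NormedAddCommGroup H] [InnerProductSpace ℂ H] [CompleteSpace H]
    [NormedAddCommGroup H'] [InnerProductSpace ℂ H']
    (D : Submodule ℂ H)
    (X0 : D →ₗ[ℂ] H')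
    (N : Submodule ℂ H)
    (hNclosed : IsClosed (N : Set H))
    (δ : ℝ) (hδ : 0 < δ)
    (hgap : ∀ u : D, (u : H) ∈ Nᗮ → 36 * δ * ‖(u : H)‖ ^ 2 ≤ ‖X0 u‖ ^ 2)
    (Xp : H →L[ℂ] H')
    (ψ : H → D)
    (hψmem : ∀ ω ∈ N, ((ψ ω : D) : H) ∈ Nᗮ)
    (hψeq : ∀ ω ∈ N, ∀ ζ : D, (ζ : H) ∈ Nᗮ →
      (inner ℂ (X0 (ψ ω)) (X0 ζ) : ℂ) = inner ℂ (-(Xp ω)) (X0 ζ))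
    (Z : H →L[ℂ] H)
    (hZ1 : ∀ ω ∈ N, Z ω = ((ψ ω : D) : H))
    (hZ2 : ∀ v ∈ Nᗮ, Z v = 0) :
    ‖Z‖ ≤ (1 / 6) * δ ^ (-(1 / 2 : ℝ)) * ‖Xp‖ := by
  have : CompleteSpace N := hNclosed.completeSpace_coe
  refine Z.opNorm_le_bound (by positivity) fun v => ?_
  set ω := N.starProjection v
  have hω : ω ∈ N := N.starProjection_apply_mem v
  have henergy : ‖X0 (ψ ω)‖ ≤ ‖Xp ω‖ := by
    simpa using norm_le_of_inner_self_eq_inner (hψeq ω hω _ (hψmem ω hω))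
  have hcoercive : 6 * √δ * ‖(ψ ω : H)‖ ≤ ‖X0 (ψ ω)‖ :=
    six_mul_sqrt_mul_le_of_mul_sq_le hδ.le (norm_nonneg _) (norm_nonneg _)
      (hgap _ (hψmem ω hω))
  rw [← N.apply_starProjection_of_forall_mem_orthogonal Z hZ2, hZ1 ω hω, Real.rpow_neg hδ.le, ← Real.sqrt_eq_rpow]
  calc ‖(ψ ω : H)‖ ≤ ‖Xp ω‖ / (6 * √δ) := by
        rw [le_div_iff₀ (by positivity)]; linarith
    _ ≤ ‖Xp‖ * ‖v‖ / (6 * √δ) := by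
        gcongr
        exact (Xp.le_opNorm ω).trans (by gcongr; exact N.norm_starProjection_apply_le v)
    _ = 1 / 6 * (√δ)⁻¹ * ‖Xp‖ * ‖v‖ := by field_simp

/-- Bound `‖Z‖ ≤ (1/6) δ^{-1/2} ‖X_p‖` for the abstract operator `Z` built from the
weak solutions `ψ(ω)` of `X₀*(X₀ψ − u) = 0` with `u = −X_p ω`.  The hypothesis that `0`
is an isolated point of the spectrum of `A₀ = X₀*X₀` at distance `d⁰ ≥ 36δ` from the
rest of the spectrum is expressed by the quadratic-form inequality
`36 δ ‖u‖² ≤ ‖X₀ u‖²` on `(Ker X₀)ᗮ ∩ Dom X₀`. -/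
theorem stmt_3 {H H' : Type*}
    [NormedAddCommGroup H] [InnerProductSpace ℂ H] [CompleteSpace H]
    [NormedAddCommGroup H'] [InnerProductSpace ℂ H'] [CompleteSpace H']
    (D : Submodule ℂ H) (hD : Dense (D : Set H))
    (X0 : D →ₗ[ℂ] H')
    (hX0closed : IsClosed {q : H × H' | ∃ u : D, (u : H) = q.1 ∧ X0 u = q.2})
    (N : Submodule ℂ H) (hN : ∀ u : D, (u : H) ∈ N ↔ X0 u = 0)
    (hNclosed : IsClosed (N : Set H))
    (δ : ℝ) (hδ : 0 < δ)
    (hgap : ∀ u : D, (u : H) ∈ Nᗮ → 36 * δ * ‖(u : H)‖ ^ 2 ≤ ‖X0 u‖ ^ 2)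
    (Xp : H →L[ℂ] H')
    (ψ : H → D)
    (hψmem : ∀ ω ∈ N, ((ψ ω : D) : H) ∈ Nᗮ)
    (hψeq : ∀ ω ∈ N, ∀ ζ : D, (ζ : H) ∈ Nᗮ →
      (inner ℂ (X0 (ψ ω)) (X0 ζ) : ℂ) = inner ℂ (-(Xp ω)) (X0 ζ))
    (Z : H →L[ℂ] H)
    (hZ1 : ∀ ω ∈ N, Z ω = ((ψ ω : D) : H))
    (hZ2 : ∀ v ∈ Nᗮ, Z v = 0) :
    ‖Z‖ ≤ (1 / 6) * δ ^ (-(1 / 2 : ℝ)) * ‖Xp‖ :=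
  stmt_3_general D X0 N hNclosed δ hδ hgap Xp ψ hψmem hψeq Z hZ1 hZ2
end

section
/- Let g^0 be the effective matrix defined by g^0 = |Ω|^{-1} ∫_Ω (b(D)Λ(x) + 1_m)* g(x) (b(D)Λ(x) + 1_m) dx, where Λ is the periodic solution of the cell problem b(D)* g (b(D)Λ + 1_m) = 0 with ∫_Ω Λ dx = 0. Then ġ ≤ g^0 ≤ ḡ, where ḡ and ġ are the arithmetic and harmonic means of g over the cell Ω. -/
/-!
Voigt bound: since `g (w_C + C)` is orthogonal to `w_C`, expanding `C = (w_C + C) - w_C` gives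
`∫ ⟨g C, C⟩ = ∫ ⟨g (w_C + C), w_C + C⟩ + ∫ ⟨g w_C, w_C⟩`, and the last term is nonnegative.

Reuss bound: for a positive definite matrix `M`, expanding `0 ≤ ⟨M (v - M⁻¹ η), v - M⁻¹ η⟩` gives
the pointwise Fenchel–Young inequality `2 Re ⟨η, v⟩ - ⟨M⁻¹ η, η⟩ ≤ ⟨M v, v⟩`. Integrating it
with `v = w_C + C`, whose integral is `|Ω| C`, and testing with `η = ġ C` gives
`|Ω| ⟨ġ C, C⟩ ≤ ∫ ⟨g (w_C + C), w_C + C⟩`.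
-/

open MeasureTheory Matrix
open scoped ComplexOrder

namespace Matrix

variable {𝕜 n : Type*} [RCLike 𝕜] [Fintype n]

lemma IsHermitian.re_dotProduct_mulVec_sub {M : Matrix n n 𝕜} (hM : M.IsHermitian)
    (p q : n → 𝕜) :
    RCLike.re (star (p - q) ⬝ᵥ M *ᵥ (p - q)) =
      RCLike.re (star p ⬝ᵥ M *ᵥ p) - 2 * RCLike.re (star q ⬝ᵥ M *ᵥ p)
        + RCLike.re (star q ⬝ᵥ M *ᵥ q) := by
  have hswap : star p ⬝ᵥ M *ᵥ q = star (star q ⬝ᵥ M *ᵥ p) := by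
    rw [star_dotProduct, star_mulVec, hM.eq, ← dotProduct_mulVec]
  simp only [star_sub, sub_dotProduct, mulVec_sub, dotProduct_sub, map_sub, hswap,
    RCLike.star_def, RCLike.conj_re]
  ring

lemma IsHermitian.star_inv_mulVec_dotProduct_mulVec [DecidableEq n] {M : Matrix n n 𝕜}
    (hM : M.IsHermitian) (hMu : IsUnit M) (η p : n → 𝕜) :
    star (M⁻¹ *ᵥ η) ⬝ᵥ M *ᵥ p = star η ⬝ᵥ p := by
  rw [star_mulVec, hM.inv.eq, ← dotProduct_mulVec, mulVec_mulVec,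
    nonsing_inv_mul M ((isUnit_iff_isUnit_det M).mp hMu), one_mulVec]

lemma PosDef.two_mul_re_dotProduct_sub_le [DecidableEq n] {M : Matrix n n 𝕜} (hM : M.PosDef)
    (η v : n → 𝕜) :
    2 * RCLike.re (star η ⬝ᵥ v) - RCLike.re (star η ⬝ᵥ M⁻¹ *ᵥ η) ≤
      RCLike.re (star v ⬝ᵥ M *ᵥ v) := by
  have h := hM.posSemidef.re_dotProduct_nonneg (v - M⁻¹ *ᵥ η)
  rw [hM.isHermitian.re_dotProduct_mulVec_sub,
    hM.isHermitian.star_inv_mulVec_dotProduct_mulVec hM.isUnit,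
    hM.isHermitian.star_inv_mulVec_dotProduct_mulVec hM.isUnit] at h
  linarith

lemma IsHermitian.posDef_of_coercive {M : Matrix n n 𝕜} (hM : M.IsHermitian) {c : ℝ}
    (hc : 0 < c) (h : ∀ v : n → 𝕜, c * ∑ i, ‖v i‖ ^ 2 ≤ RCLike.re (star v ⬝ᵥ M *ᵥ v)) :
    M.PosDef := by
  refine PosDef.of_dotProduct_mulVec_pos hM fun v hv => RCLike.pos_iff.mpr
    ⟨lt_of_lt_of_le (mul_pos hc ?_) (h v), hM.im_star_dotProduct_mulVec_self v⟩
  obtain ⟨i, hi⟩ := Function.ne_iff.mp hv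
  exact Finset.sum_pos' (fun j _ => by positivity) ⟨i, Finset.mem_univ i, by positivity⟩

lemma PosSemidef.norm_dotProduct_mulVec_le {M : Matrix n n 𝕜} (hM : M.PosSemidef)
    (a b : n → 𝕜) :
    ‖star a ⬝ᵥ M *ᵥ b‖ ≤
      (RCLike.re (star a ⬝ᵥ M *ᵥ a) + RCLike.re (star b ⬝ᵥ M *ᵥ b)) / 2 := by
  let _ : SeminormedAddCommGroup (n → 𝕜) := M.toSeminormedAddCommGroup hM
  let _ : InnerProductSpace 𝕜 (n → 𝕜) := M.toInnerProductSpace hM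
  have hinner : ∀ x y : n → 𝕜, (inner 𝕜 x y : 𝕜) = star x ⬝ᵥ M *ᵥ y := fun x y =>
    dotProduct_comm _ _
  have hcs := norm_inner_le_norm (𝕜 := 𝕜) a b
  have hsa := inner_self_eq_norm_sq (𝕜 := 𝕜) a
  have hsb := inner_self_eq_norm_sq (𝕜 := 𝕜) b
  rw [hinner] at hcs hsa hsb
  rw [hsa, hsb]
  -- Stated for arbitrary reals: a `‖a‖` typed here would elaborate to the sup norm on `n → 𝕜`.
  have amgm : ∀ x y : ℝ, x * y ≤ (x ^ 2 + y ^ 2) / 2 := fun x y => by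
    linarith [two_mul_le_add_sq x y]
  exact hcs.trans (amgm _ _)

end Matrix

namespace MeasureTheory

variable {X 𝕜 n : Type*} [MeasurableSpace X] {μ : Measure X} [RCLike 𝕜] [Fintype n]

lemma integrable_dotProduct_const {v : X → n → 𝕜} (hv : ∀ i, Integrable (fun x => v x i) μ)
    (a : n → 𝕜) : Integrable (fun x => a ⬝ᵥ v x) μ :=
  integrable_finsetSum _ fun i _ => (hv i).const_mul (a i)

lemma integral_dotProduct_const {v : X → n → 𝕜} (hv : ∀ i, Integrable (fun x => v x i) μ)
    (a : n → 𝕜) : ∫ x, a ⬝ᵥ v x ∂μ = a ⬝ᵥ fun i => ∫ x, v x i ∂μ := by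
  simp only [dotProduct]
  rw [integral_finsetSum _ fun i _ => (hv i).const_mul (a i)]
  simp only [integral_const_mul]

lemma integrable_mulVec_apply {M : X → Matrix n n 𝕜}
    (hM : ∀ i j, Integrable (fun x => M x i j) μ) (b : n → 𝕜) (i : n) :
    Integrable (fun x => (M x *ᵥ b) i) μ :=
  integrable_finsetSum _ fun j _ => (hM i j).mul_const (b j)

lemma integral_mulVec_apply {M : X → Matrix n n 𝕜}
    (hM : ∀ i j, Integrable (fun x => M x i j) μ) (b : n → 𝕜) (i : n) :
    ∫ x, (M x *ᵥ b) i ∂μ = ((Matrix.of fun i j => ∫ x, M x i j ∂μ) *ᵥ b) i := by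
  simp only [mulVec, dotProduct]
  rw [integral_finsetSum _ fun j _ => (hM i j).mul_const (b j)]
  simp only [integral_mul_const, of_apply]

lemma integrable_dotProduct_mulVec_const {M : X → Matrix n n 𝕜}
    (hM : ∀ i j, Integrable (fun x => M x i j) μ) (a b : n → 𝕜) :
    Integrable (fun x => a ⬝ᵥ M x *ᵥ b) μ :=
  integrable_dotProduct_const (integrable_mulVec_apply hM b) a

lemma integral_dotProduct_mulVec_const {M : X → Matrix n n 𝕜}
    (hM : ∀ i j, Integrable (fun x => M x i j) μ) (a b : n → 𝕜) :
    ∫ x, a ⬝ᵥ M x *ᵥ b ∂μ = a ⬝ᵥ (Matrix.of fun i j => ∫ x, M x i j ∂μ) *ᵥ b := by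
  rw [integral_dotProduct_const (integrable_mulVec_apply hM b)]
  simp only [integral_mulVec_apply hM]

lemma AEStronglyMeasurable.star_dotProduct_mulVec {M : X → Matrix n n 𝕜}
    {a b : X → n → 𝕜} (hM : ∀ i j, AEStronglyMeasurable (fun x => M x i j) μ)
    (ha : ∀ i, AEStronglyMeasurable (fun x => a x i) μ)
    (hb : ∀ i, AEStronglyMeasurable (fun x => b x i) μ) :
    AEStronglyMeasurable (fun x => star (a x) ⬝ᵥ M x *ᵥ b x) μ := by
  simp only [dotProduct, mulVec, Pi.star_apply]
  exact Finset.aestronglyMeasurable_fun_sum _ fun i _ => ((ha i).star).mul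
    (Finset.aestronglyMeasurable_fun_sum _ fun j _ => (hM i j).mul (hb j))

lemma integrable_star_dotProduct_mulVec {M : X → Matrix n n 𝕜} {a b : X → n → 𝕜}
    (hM : ∀ x, (M x).PosSemidef) (hMm : ∀ i j, AEStronglyMeasurable (fun x => M x i j) μ)
    (ha : ∀ i, AEStronglyMeasurable (fun x => a x i) μ)
    (hb : ∀ i, AEStronglyMeasurable (fun x => b x i) μ)
    (hqa : Integrable (fun x => RCLike.re (star (a x) ⬝ᵥ M x *ᵥ a x)) μ)
    (hqb : Integrable (fun x => RCLike.re (star (b x) ⬝ᵥ M x *ᵥ b x)) μ) :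
    Integrable (fun x => star (a x) ⬝ᵥ M x *ᵥ b x) μ :=
  ((hqa.add hqb).div_const 2).mono' (.star_dotProduct_mulVec hMm ha hb)
    (.of_forall fun x => (hM x).norm_dotProduct_mulVec_le (a x) (b x))

lemma integrable_re_star_dotProduct_mulVec_self {M : X → Matrix n n 𝕜} {u : X → n → 𝕜}
    (hM : ∀ x, (M x).PosSemidef) (hMm : ∀ i j, AEStronglyMeasurable (fun x => M x i j) μ)
    {K : ℝ} (hK : ∀ x (v : n → 𝕜), RCLike.re (star v ⬝ᵥ M x *ᵥ v) ≤ K * ∑ i, ‖v i‖ ^ 2)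
    (hu : ∀ i, AEStronglyMeasurable (fun x => u x i) μ)
    (hu2 : Integrable (fun x => ∑ i, ‖u x i‖ ^ 2) μ) :
    Integrable (fun x => RCLike.re (star (u x) ⬝ᵥ M x *ᵥ u x)) μ :=
  (hu2.const_mul K).mono' (AEStronglyMeasurable.star_dotProduct_mulVec hMm hu hu).re
    (.of_forall fun x => by
      rw [Real.norm_of_nonneg ((hM x).re_dotProduct_nonneg (u x))]
      exact hK x (u x))

lemma re_integral_le_of_integral_star_dotProduct_mulVec_eq_zero {M : X → Matrix n n 𝕜}
    {u : X → n → 𝕜} (hM : ∀ x, (M x).PosSemidef)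
    (hMi : ∀ i j, Integrable (fun x => M x i j) μ)
    (hu : ∀ i, AEStronglyMeasurable (fun x => u x i) μ)
    (huu : Integrable (fun x => RCLike.re (star (u x) ⬝ᵥ M x *ᵥ u x)) μ) (C : n → 𝕜)
    (hv : Integrable (fun x => star (u x + C) ⬝ᵥ M x *ᵥ (u x + C)) μ)
    (horth : ∫ x, star (u x) ⬝ᵥ M x *ᵥ (u x + C) ∂μ = 0) :
    RCLike.re (∫ x, star (u x + C) ⬝ᵥ M x *ᵥ (u x + C) ∂μ) ≤
      RCLike.re (∫ x, star C ⬝ᵥ M x *ᵥ C ∂μ) := by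
  have hcross : Integrable (fun x => star (u x) ⬝ᵥ M x *ᵥ (u x + C)) μ :=
    integrable_star_dotProduct_mulVec hM (fun i j => (hMi i j).1) hu
      (fun i => (hu i).add aestronglyMeasurable_const) huu hv.re
  have hpoint : ∀ x, RCLike.re (star (u x + C) ⬝ᵥ M x *ᵥ (u x + C))
      - 2 * RCLike.re (star (u x) ⬝ᵥ M x *ᵥ (u x + C)) ≤ RCLike.re (star C ⬝ᵥ M x *ᵥ C) := by
    intro x
    have h := (hM x).isHermitian.re_dotProduct_mulVec_sub (u x + C) (u x)
    rw [add_sub_cancel_left] at h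
    linarith [(hM x).re_dotProduct_nonneg (u x)]
  have hmono : ∫ x, RCLike.re (star (u x + C) ⬝ᵥ M x *ᵥ (u x + C))
      - 2 * RCLike.re (star (u x) ⬝ᵥ M x *ᵥ (u x + C)) ∂μ ≤
      ∫ x, RCLike.re (star C ⬝ᵥ M x *ᵥ C) ∂μ :=
    integral_mono (hv.re.sub (hcross.re.const_mul 2))
      (integrable_dotProduct_mulVec_const hMi (star C) C).re hpoint
  rwa [integral_sub hv.re (hcross.re.const_mul 2), integral_const_mul, integral_re hv,
    integral_re hcross, horth, map_zero, mul_zero, sub_zero,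
    integral_re (integrable_dotProduct_mulVec_const hMi (star C) C)] at hmono

lemma inv_mul_re_integral_le_re_dotProduct_average_mulVec {M : X → Matrix n n 𝕜}
    {u : X → n → 𝕜} (hM : ∀ x, (M x).PosSemidef)
    (hMi : ∀ i j, Integrable (fun x => M x i j) μ)
    (hu : ∀ i, AEStronglyMeasurable (fun x => u x i) μ)
    (huu : Integrable (fun x => RCLike.re (star (u x) ⬝ᵥ M x *ᵥ u x)) μ) (C : n → 𝕜)
    (hv : Integrable (fun x => star (u x + C) ⬝ᵥ M x *ᵥ (u x + C)) μ)
    (horth : ∫ x, star (u x) ⬝ᵥ M x *ᵥ (u x + C) ∂μ = 0) :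
    (μ Set.univ).toReal⁻¹ * RCLike.re (∫ x, star (u x + C) ⬝ᵥ M x *ᵥ (u x + C) ∂μ) ≤
      RCLike.re (star C ⬝ᵥ
        (Matrix.of fun i j => ((μ Set.univ).toReal : 𝕜)⁻¹ * ∫ x, M x i j ∂μ) *ᵥ C) := by
  have hscale : (Matrix.of fun i j => ((μ Set.univ).toReal : 𝕜)⁻¹ * ∫ x, M x i j ∂μ) =
      ((μ Set.univ).toReal : 𝕜)⁻¹ • Matrix.of fun i j => ∫ x, M x i j ∂μ := rfl
  rw [hscale, smul_mulVec, dotProduct_smul, ← integral_dotProduct_mulVec_const hMi, smul_eq_mul,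
    ← RCLike.ofReal_inv, RCLike.re_ofReal_mul]
  exact mul_le_mul_of_nonneg_left
    (re_integral_le_of_integral_star_dotProduct_mulVec_eq_zero hM hMi hu huu C hv horth)
    (inv_nonneg.mpr ENNReal.toReal_nonneg)

lemma two_mul_re_dotProduct_integral_sub_le [DecidableEq n] {M : X → Matrix n n 𝕜}
    {v : X → n → 𝕜} (hM : ∀ x, (M x).PosDef)
    (hMinv : ∀ i j, Integrable (fun x => (M x)⁻¹ i j) μ) (hv : ∀ i, Integrable (fun x => v x i) μ)
    (hvv : Integrable (fun x => RCLike.re (star (v x) ⬝ᵥ M x *ᵥ v x)) μ) (η : n → 𝕜) :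
    2 * RCLike.re (star η ⬝ᵥ fun i => ∫ x, v x i ∂μ)
        - RCLike.re (star η ⬝ᵥ (Matrix.of fun i j => ∫ x, (M x)⁻¹ i j ∂μ) *ᵥ η) ≤
      ∫ x, RCLike.re (star (v x) ⬝ᵥ M x *ᵥ v x) ∂μ := by
  have hηv := integrable_dotProduct_const hv (star η)
  have hηMη := integrable_dotProduct_mulVec_const hMinv (star η) η
  have hmono : ∫ x, 2 * RCLike.re (star η ⬝ᵥ v x) - RCLike.re (star η ⬝ᵥ (M x)⁻¹ *ᵥ η) ∂μ ≤
      ∫ x, RCLike.re (star (v x) ⬝ᵥ M x *ᵥ v x) ∂μ :=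
    integral_mono ((hηv.re.const_mul 2).sub hηMη.re) hvv
      fun x => (hM x).two_mul_re_dotProduct_sub_le η (v x)
  rwa [integral_sub (hηv.re.const_mul 2) hηMη.re, integral_const_mul, integral_re hηv,
    integral_re hηMη, integral_dotProduct_const hv, integral_dotProduct_mulVec_const hMinv]
    at hmono

lemma re_dotProduct_inv_average_inv_mulVec_le [DecidableEq n] {M : X → Matrix n n 𝕜}
    {v : X → n → 𝕜} (hμ : 0 < (μ Set.univ).toReal) (hM : ∀ x, (M x).PosDef)
    (hMinv : ∀ i j, Integrable (fun x => (M x)⁻¹ i j) μ) (hv : ∀ i, Integrable (fun x => v x i) μ)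
    (hvv : Integrable (fun x => star (v x) ⬝ᵥ M x *ᵥ v x) μ) (C : n → 𝕜)
    (hmean : (fun i => ∫ x, v x i ∂μ) = (μ Set.univ).toReal • C) :
    RCLike.re (star C ⬝ᵥ
        (Matrix.of fun i j => ((μ Set.univ).toReal : 𝕜)⁻¹ * ∫ x, (M x)⁻¹ i j ∂μ)⁻¹ *ᵥ C) ≤
      (μ Set.univ).toReal⁻¹ * RCLike.re (∫ x, star (v x) ⬝ᵥ M x *ᵥ v x ∂μ) := by
  set T := (μ Set.univ).toReal
  set G : Matrix n n 𝕜 := Matrix.of fun i j => (T : 𝕜)⁻¹ * ∫ x, (M x)⁻¹ i j ∂μ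
  rw [← integral_re hvv]
  by_cases hG : IsUnit G.det
  · set η := G⁻¹ *ᵥ C
    have hT : (T : 𝕜) ≠ 0 := RCLike.ofReal_ne_zero.mpr hμ.ne'
    have hintM : (Matrix.of fun i j => ∫ x, (M x)⁻¹ i j ∂μ) = T • G := by
      ext i j
      simp [G, RCLike.real_smul_eq_coe_mul, ← mul_assoc, mul_inv_cancel₀ hT]
    have key := two_mul_re_dotProduct_integral_sub_le hM hMinv hv hvv.re η
    rw [hmean, hintM, smul_mulVec, mulVec_mulVec, mul_nonsing_inv G hG, one_mulVec,
      dotProduct_smul, RCLike.smul_re] at key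
    have hconj : RCLike.re (star η ⬝ᵥ C) = RCLike.re (star C ⬝ᵥ η) := by
      rw [← RCLike.conj_re (star C ⬝ᵥ η), ← RCLike.star_def, star_dotProduct]
    rw [le_inv_mul_iff₀ hμ, ← hconj]
    linarith
  · rw [nonsing_inv_apply_not_isUnit G hG, zero_mulVec, dotProduct_zero, map_zero]
    exact mul_nonneg (inv_nonneg.mpr hμ.le)
      (integral_nonneg fun x => (hM x).posSemidef.re_dotProduct_nonneg (v x))

end MeasureTheory

/-- Voigt–Reuss bracketing `ġ ≤ g⁰ ≤ ḡ` for the effective matrix (Proposition 5.3),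
stated as an inequality of quadratic forms.  The concrete space `{b(D)v : v ∈ H̃^p(Ω)}`
is abstracted as a subspace `B` of functions with zero mean, `w C` is the solution of the
cell problem (`g(w C + C)` is orthogonal to `B`), and the effective quadratic form is
`⟨g⁰C, C⟩ = |Ω|⁻¹ ∫ ⟨g(x)(w_C(x)+C), w_C(x)+C⟩ dx`. -/
theorem stmt_9 {X : Type*} [MeasurableSpace X] (μ : Measure X) [IsFiniteMeasure μ]
    (hμ : 0 < (μ Set.univ).toReal) {m : ℕ}
    (g : X → Matrix (Fin m) (Fin m) ℂ)
    (hherm : ∀ x, (g x).IsHermitian)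
    (c Cb : ℝ) (hc : 0 < c)
    (hpos : ∀ x (v : Fin m → ℂ), c * ∑ i, ‖v i‖ ^ 2 ≤ (star v ⬝ᵥ (g x).mulVec v).re)
    (hbdd : ∀ x (v : Fin m → ℂ), (star v ⬝ᵥ (g x).mulVec v).re ≤ Cb * ∑ i, ‖v i‖ ^ 2)
    (hintg : ∀ i j, Integrable (fun x => g x i j) μ)
    (hintginv : ∀ i j, Integrable (fun x => (g x)⁻¹ i j) μ)
    (B : Submodule ℂ (X → Fin m → ℂ))
    (hBint : ∀ u ∈ B, ∀ i, Integrable (fun x => u x i) μ)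
    (hBL2 : ∀ u ∈ B, Integrable (fun x => ∑ i, ‖u x i‖ ^ 2) μ)
    (hBmean : ∀ u ∈ B, ∀ i, (∫ x, u x i ∂μ) = 0)
    (w : (Fin m → ℂ) → X → Fin m → ℂ) (hwB : ∀ C, w C ∈ B)
    (hcell : ∀ (C : Fin m → ℂ), ∀ u ∈ B,
      (∫ x, star (u x) ⬝ᵥ (g x).mulVec (fun k => w C x k + C k) ∂μ) = 0)
    (hintQ : ∀ C : Fin m → ℂ,
      Integrable (fun x => star (fun k => w C x k + C k) ⬝ᵥ
        (g x).mulVec (fun k => w C x k + C k)) μ)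
    (C : Fin m → ℂ) :
    (star C ⬝ᵥ
        ((Matrix.of fun i j => (((μ Set.univ).toReal : ℂ))⁻¹ * ∫ x, (g x)⁻¹ i j ∂μ)⁻¹).mulVec
          C).re ≤
      (μ Set.univ).toReal⁻¹ *
        (∫ x, star (fun k => w C x k + C k) ⬝ᵥ (g x).mulVec (fun k => w C x k + C k) ∂μ).re ∧
    (μ Set.univ).toReal⁻¹ *
        (∫ x, star (fun k => w C x k + C k) ⬝ᵥ (g x).mulVec (fun k => w C x k + C k) ∂μ).re ≤
      (star C ⬝ᵥ
        (Matrix.of fun i j => (((μ Set.univ).toReal : ℂ))⁻¹ * ∫ x, g x i j ∂μ).mulVec C).re := by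
  have hg : ∀ x, (g x).PosDef := fun x => (hherm x).posDef_of_coercive hc (hpos x)
  have hw : ∀ i, Integrable (fun x => w C x i) μ := hBint _ (hwB C)
  have hmean : (fun i => ∫ x, w C x i + C i ∂μ) = (μ Set.univ).toReal • C := by
    funext i
    rw [integral_add (hw i) (integrable_const _), hBmean _ (hwB C), integral_const,
      zero_add, measureReal_def]
    rfl
  have hww := integrable_re_star_dotProduct_mulVec_self (fun x => (hg x).posSemidef)
    (fun i j => (hintg i j).1) hbdd (fun i => (hw i).1) (hBL2 _ (hwB C))
  exact ⟨re_dotProduct_inv_average_inv_mulVec_le hμ hg hintginv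
      (fun i => (hw i).add (integrable_const (C i))) (hintQ C) C hmean,
    inv_mul_re_integral_le_re_dotProduct_average_mulVec (fun x => (hg x).posSemidef) hintg
      (fun i => (hw i).1) hww C (hintQ C) (hcell C _ (hwB C))⟩
end

section
/- For every φ ∈ (0, 2π), every ζ = |ζ|e^{iφ} with |ζ| > 0, and every x ≥ 0: (x + |ζ|ε^{2p}) · |x − ζε^{2p}|^{-1} ≤ 2 c(φ), where ε > 0 and c(φ) = |sin φ|^{-1} for φ ∈ (0, π/2) ∪ (3π/2, 2π), c(φ) = 1 otherwise. -/
/-- The constant `c(φ)` from (7.22). -/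
noncomputable def cOf (φ : ℝ) : ℝ :=
  if φ ∈ Set.Ioo 0 (Real.pi / 2) ∪ Set.Ioo (3 * Real.pi / 2) (2 * Real.pi) then
    |Real.sin φ|⁻¹
  else 1

/-!
Write `N = ‖x - s e^{iφ}‖`, so that `N² = (x - s)² + 2xs(1 - cos φ)`. Since `(x + s)² = (x - s)² + 4xs`,
the identity `4N² - sin²φ (x + s)² = (4 - sin²φ)(x - s)² + 4xs(1 - cos φ)²` gives `|sin φ|(x + s) ≤ 2N`,
and for `cos φ ≤ 0` directly `(x + s)² ≤ 4N²`. The first bound is used where `c(φ) = |sin φ|⁻¹`,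
the second on the remaining sector `[π/2, 3π/2]`.
-/

open Real Set

lemma norm_ofReal_sub_mul_exp_sq (x s φ : ℝ) :
    ‖(x : ℂ) - (s : ℂ) * Complex.exp (φ * Complex.I)‖ ^ 2 =
      (x - s) ^ 2 + 2 * x * s * (1 - cos φ) := by
  rw [Complex.sq_norm, Complex.normSq_apply]
  simp only [Complex.exp_mul_I, ← Complex.ofReal_cos, ← Complex.ofReal_sin, Complex.sub_re,
    Complex.sub_im, Complex.mul_re, Complex.mul_im, Complex.add_re, Complex.add_im,
    Complex.ofReal_re, Complex.ofReal_im, Complex.I_re, Complex.I_im]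
  linear_combination s ^ 2 * sin_sq_add_cos_sq φ

section

variable {x s : ℝ} (φ : ℝ)

lemma abs_sin_mul_add_le_two_mul_norm (hx : 0 ≤ x) (hs : 0 ≤ s) :
    |sin φ| * (x + s) ≤ 2 * ‖(x : ℂ) - (s : ℂ) * Complex.exp (φ * Complex.I)‖ := by
  refine (pow_le_pow_iff_left₀ (by positivity) (by positivity) two_ne_zero).mp ?_
  rw [mul_pow, mul_pow, norm_ofReal_sub_mul_exp_sq, sq_abs]
  have hsin : sin φ ^ 2 ≤ 4 := by nlinarith [sin_sq_le_one φ]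
  have hxs : 0 ≤ x * s := mul_nonneg hx hs
  nlinarith [mul_nonneg (sub_nonneg.mpr hsin) (sq_nonneg (x - s)),
    mul_nonneg hxs (sq_nonneg (1 - cos φ)), sin_sq_add_cos_sq φ]

lemma add_le_two_mul_norm_of_cos_nonpos (hx : 0 ≤ x) (hs : 0 ≤ s) (hcos : cos φ ≤ 0) :
    x + s ≤ 2 * ‖(x : ℂ) - (s : ℂ) * Complex.exp (φ * Complex.I)‖ := by
  refine (pow_le_pow_iff_left₀ (by positivity) (by positivity) two_ne_zero).mp ?_
  rw [mul_pow, norm_ofReal_sub_mul_exp_sq]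
  nlinarith [sq_nonneg (x - s), mul_nonneg (mul_nonneg hx hs) (neg_nonneg.mpr hcos)]

end

lemma sin_ne_zero_of_mem_cOf_sector {φ : ℝ}
    (h : φ ∈ Ioo 0 (π / 2) ∪ Ioo (3 * π / 2) (2 * π)) : sin φ ≠ 0 := by
  rcases h with ⟨h0, h1⟩ | ⟨h0, h1⟩
  · exact (sin_pos_of_pos_of_lt_pi h0 (by linarith)).ne'
  · have hpos := sin_pos_of_pos_of_lt_pi (x := 2 * π - φ) (by linarith) (by linarith)
    rw [sin_two_pi_sub] at hpos
    exact (neg_pos.mp hpos).ne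

lemma cos_nonpos_of_notMem_cOf_sector {φ : ℝ} (hφ : φ ∈ Ioo 0 (2 * π))
    (h : φ ∉ Ioo 0 (π / 2) ∪ Ioo (3 * π / 2) (2 * π)) : cos φ ≤ 0 := by
  simp only [mem_union, mem_Ioo, not_or, not_and, not_lt] at h
  have hle : φ ≤ 3 * π / 2 := not_lt.mp fun hlt => (h.2 hlt).not_gt hφ.2
  exact cos_nonpos_of_pi_div_two_le_of_le (h.1 hφ.1) (by linarith)

lemma cOf_nonneg (φ : ℝ) : 0 ≤ cOf φ := by
  unfold cOf
  split_ifs <;> positivity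

lemma add_le_two_mul_cOf_mul_norm {φ x s : ℝ} (hφ : φ ∈ Ioo 0 (2 * π)) (hx : 0 ≤ x)
    (hs : 0 ≤ s) :
    x + s ≤ 2 * cOf φ * ‖(x : ℂ) - (s : ℂ) * Complex.exp (φ * Complex.I)‖ := by
  unfold cOf
  split_ifs with h
  · have hsin : 0 < |sin φ| := abs_pos.mpr (sin_ne_zero_of_mem_cOf_sector h)
    rw [mul_comm 2, mul_assoc, inv_mul_eq_div, le_div_iff₀ hsin, mul_comm]
    exact abs_sin_mul_add_le_two_mul_norm φ hx hs
  · rw [mul_one]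
    exact add_le_two_mul_norm_of_cos_nonpos φ hx hs (cos_nonpos_of_notMem_cOf_sector hφ h)

theorem stmt_19_general (φ : ℝ) (hφ : φ ∈ Set.Ioo 0 (2 * Real.pi)) (r : ℝ) (hr : 0 < r)
    (ε : ℝ) (p : ℕ) (x : ℝ) (hx : 0 ≤ x) :
    (x + r * ε ^ (2 * p)) *
        ‖(x : ℂ) - ((r * ε ^ (2 * p) : ℝ) : ℂ) * Complex.exp (φ * Complex.I)‖⁻¹ ≤
      2 * cOf φ := by
  have hs : 0 ≤ r * ε ^ (2 * p) := mul_nonneg hr.le ((even_two_mul p).pow_nonneg ε)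
  exact mul_inv_le_of_le_mul₀ (norm_nonneg _) (by linarith [cOf_nonneg φ])
    (add_le_two_mul_cOf_mul_norm hφ hx hs)

/-- Scalar inequality (7.54): for `φ ∈ (0,2π)`, `ζ = |ζ|e^{iφ}` with `|ζ| > 0`, `ε > 0`
and `x ≥ 0`, `(x + |ζ|ε^{2p}) |x − ζε^{2p}|⁻¹ ≤ 2c(φ)`. -/
theorem stmt_19 (φ : ℝ) (hφ : φ ∈ Set.Ioo 0 (2 * Real.pi)) (r : ℝ) (hr : 0 < r)
    (ε : ℝ) (hε : 0 < ε) (p : ℕ) (hp : 1 ≤ p) (x : ℝ) (hx : 0 ≤ x) :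
    (x + r * ε ^ (2 * p)) *
        ‖(x : ℂ) - ((r * ε ^ (2 * p) : ℝ) : ℂ) * Complex.exp (φ * Complex.I)‖⁻¹ ≤
      2 * cOf φ :=
  stmt_19_general φ hφ r hr ε p x hx
end
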